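/- Let H be a Hopf algebra with bijective antipode over a field k containing ℚ, C a left H-module coalgebra, A a left H-module algebra, and M a stable right-left anti-Yetter-Drinfeld module over H. Suppose C acts on A via a linear map C ⊗ A → A satisfying c(ab) = (c^{(1)}a)(c^{(2)}b), c1 = ε(c)1, and h(ca) = (hc)a for all h ∈ H, c ∈ C, a, b ∈ A. Then for every element x = m ⊗_H (c_0 ⊗ ⋯ ⊗ c_n) of M ⊗_H C^{⊗(n+1)} that is a cyclic cocycle (i.e., b_n x = 0 and τ_n x = (−1)^n x) and every f ∈ Hom_H(M ⊗ A, k) with b_0 f = 0 and τ_0 f = f, the functional (x # f)(a_0 ⊗ ⋯ ⊗ a_n) := f(m ⊗_H (c_0 a_0)(c_1 a_1)⋯(c_n a_n)) is a cyclic n-cocycle on the algebra A in the ordinary cyclic cohomology complex of A, and its cyclic cohomology class depends only on the class of x in HC^n_H(C,M). -/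

import Mathlib

open TensorProduct

namespace HC

variable {k : Type} [Field k]
variable {H : Type} [Ring H] [Algebra k H]
variable {M : Type} [AddCommGroup M] [Module k M]

def IsLAct (act : H →ₗ[k] M →ₗ[k] M) : Prop :=
  act 1 = LinearMap.id ∧ ∀ g h : H, act (g * h) = (act g) ∘ₗ (act h)

def IsRAct (act : H →ₗ[k] M →ₗ[k] M) : Prop :=
  act 1 = LinearMap.id ∧ ∀ g h : H, act (g * h) = (act h) ∘ₗ (act g)

def IsLCoact (Δ : H →ₗ[k] H ⊗[k] H) (ε : H →ₗ[k] k)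
    (coact : M →ₗ[k] H ⊗[k] M) : Prop :=
  ((TensorProduct.map Δ LinearMap.id) ∘ₗ coact =
    ((TensorProduct.assoc k H H M).symm.toLinearMap) ∘ₗ
      (TensorProduct.map LinearMap.id coact) ∘ₗ coact) ∧
  (∀ m : M, (TensorProduct.lid k M) ((TensorProduct.map ε LinearMap.id) (coact m)) = m)

def AYDrl (Δ : H →ₗ[k] H ⊗[k] H) (S : H →ₗ[k] H)
    (act : H →ₗ[k] M →ₗ[k] M) (coact : M →ₗ[k] H ⊗[k] M) : Prop :=
  ∀ (h : H) (m : M) (s : Finset ℕ) (a b : ℕ → H)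
    (t : ℕ → Finset ℕ) (c d : ℕ → ℕ → H)
    (u : Finset ℕ) (e : ℕ → H) (m0 : ℕ → M),
    Δ h = ∑ i ∈ s, a i ⊗ₜ b i →
    (∀ i ∈ s, Δ (b i) = ∑ j ∈ t i, c i j ⊗ₜ d i j) →
    coact m = ∑ l ∈ u, e l ⊗ₜ m0 l →
    coact (act h m) = ∑ i ∈ s, ∑ j ∈ t i, ∑ l ∈ u,
      (S (d i j) * e l * a i) ⊗ₜ act (c i j) (m0 l)

def StableL (act : H →ₗ[k] M →ₗ[k] M) (coact : M →ₗ[k] H ⊗[k] M) : Prop :=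
  ∀ (m : M) (u : Finset ℕ) (e : ℕ → H) (m0 : ℕ → M),
    coact m = ∑ l ∈ u, e l ⊗ₜ m0 l →
    ∑ l ∈ u, act (e l) (m0 l) = m

variable {C : Type} [AddCommGroup C] [Module k C]

/-- Coalgebra axioms for `(ΔC, εC)`. -/
def IsCoalg (ΔC : C →ₗ[k] C ⊗[k] C) (εC : C →ₗ[k] k) : Prop :=
  ((TensorProduct.map ΔC LinearMap.id) ∘ₗ ΔC =
    (TensorProduct.assoc k C C C).symm.toLinearMap ∘ₗ
      (TensorProduct.map LinearMap.id ΔC) ∘ₗ ΔC) ∧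
  (∀ c : C, (TensorProduct.lid k C) ((TensorProduct.map εC LinearMap.id) (ΔC c)) = c) ∧
  (∀ c : C, (TensorProduct.rid k C) ((TensorProduct.map LinearMap.id εC) (ΔC c)) = c)

/-- `C` is an `H`-module coalgebra: `Δ(hc) = h⁽¹⁾c⁽¹⁾ ⊗ h⁽²⁾c⁽²⁾` and
`ε(hc) = ε(h)ε(c)`. -/
def IsModCoalg (Δ : H →ₗ[k] H ⊗[k] H) (ε : H →ₗ[k] k)
    (ΔC : C →ₗ[k] C ⊗[k] C) (εC : C →ₗ[k] k)
    (actC : H →ₗ[k] C →ₗ[k] C) : Prop :=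
  (∀ (h : H) (c : C) (s : Finset ℕ) (a b : ℕ → H)
      (u : Finset ℕ) (c1 c2 : ℕ → C),
    Δ h = ∑ i ∈ s, a i ⊗ₜ b i →
    ΔC c = ∑ j ∈ u, c1 j ⊗ₜ c2 j →
    ΔC (actC h c) = ∑ i ∈ s, ∑ j ∈ u,
      actC (a i) (c1 j) ⊗ₜ actC (b i) (c2 j)) ∧
  (∀ (h : H) (c : C), εC (actC h c) = ε h * εC c)




variable (C : Type) [AddCommGroup C] [Module k C]
variable {M : Type} [AddCommGroup M] [Module k M]

/-- The `(n+1)`-fold tensor power `C^{⊗(n+1)}` (as a bundled module). -/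
noncomputable def Tpow : ℕ → ModuleCat.{0} k
  | 0 => ModuleCat.of k C
  | n + 1 => ModuleCat.of k (C ⊗[k] ↥(Tpow n))

variable {C}

/-- Appending a factor at the end: `(c_1 ⊗ ⋯ ⊗ c_n) ⊗ c ↦ c_1 ⊗ ⋯ ⊗ c_n ⊗ c`. -/
noncomputable def snoc :
    (n : ℕ) → (↥(Tpow (k := k) C n) ⊗[k] C →ₗ[k] ↥(Tpow (k := k) C (n+1)))
  | 0 => LinearMap.id
  | n + 1 =>
    (TensorProduct.map LinearMap.id (snoc n)) ∘ₗ
      (TensorProduct.assoc k C ↥(Tpow (k := k) C n) C).toLinearMap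

/-- The diagonal action of `H` on `C^{⊗(n+1)}`:
`h (c_0 ⊗ ⋯ ⊗ c_n) = h⁽¹⁾c_0 ⊗ ⋯ ⊗ h⁽ⁿ⁺¹⁾c_n`. -/
noncomputable def dAct (Δ : H →ₗ[k] H ⊗[k] H) (actC : H →ₗ[k] C →ₗ[k] C) :
    (n : ℕ) → (H ⊗[k] ↥(Tpow (k := k) C n) →ₗ[k] ↥(Tpow (k := k) C n))
  | 0 => TensorProduct.lift actC
  | n + 1 =>
    (TensorProduct.map (TensorProduct.lift actC) (dAct Δ actC n)) ∘ₗ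
      (TensorProduct.tensorTensorTensorComm k H H C ↥(Tpow (k := k) C n)).toLinearMap ∘ₗ
      (TensorProduct.map Δ LinearMap.id)

/-- The cyclic operator `τ_n (m ⊗ c_0 ⊗ ⋯ ⊗ c_n) =
m⁽⁰⁾ ⊗ c_1 ⊗ ⋯ ⊗ c_n ⊗ m⁽⁻¹⁾ c_0` on `M ⊗ C^{⊗(n+1)}`. -/
noncomputable def cyc (actC : H →ₗ[k] C →ₗ[k] C) (coactM : M →ₗ[k] H ⊗[k] M) :
    (n : ℕ) → (M ⊗[k] ↥(Tpow (k := k) C n) →ₗ[k] M ⊗[k] ↥(Tpow (k := k) C n))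
  | 0 =>
    (TensorProduct.map LinearMap.id (TensorProduct.lift actC)) ∘ₗ
      (TensorProduct.assoc k M H C).toLinearMap ∘ₗ
      (TensorProduct.map ((TensorProduct.comm k H M).toLinearMap ∘ₗ coactM) LinearMap.id)
  | n + 1 =>
    (TensorProduct.map LinearMap.id
        ((snoc (n := n)) ∘ₗ (TensorProduct.comm k C ↥(Tpow (k := k) C n)).toLinearMap)) ∘ₗ
      (TensorProduct.leftComm k C M ↥(Tpow (k := k) C n)).toLinearMap ∘ₗ
      (TensorProduct.map (TensorProduct.lift actC) LinearMap.id) ∘ₗ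
      (TensorProduct.tensorTensorTensorComm k H M C ↥(Tpow (k := k) C n)).toLinearMap ∘ₗ
      (TensorProduct.map coactM LinearMap.id)

/-- The subspace of `M ⊗ C^{⊗(n+1)}` spanned by the relations defining
the balanced tensor product `M ⊗_H C^{⊗(n+1)}` (for a right action on `M`
in curried form and the diagonal action on `C^{⊗(n+1)}`). -/
noncomputable def rel (Δ : H →ₗ[k] H ⊗[k] H) (actC : H →ₗ[k] C →ₗ[k] C)
    (actM : H →ₗ[k] M →ₗ[k] M) (n : ℕ) :
    Submodule k (M ⊗[k] ↥(Tpow (k := k) C n)) :=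
  Submodule.span k
    {z | ∃ (h : H) (m : M) (x : ↥(Tpow (k := k) C n)),
      z = (actM h m) ⊗ₜ x - m ⊗ₜ (dAct Δ actC n (h ⊗ₜ x))}


end HC

namespace HC

variable {k : Type} [Field k]
variable {H : Type} [Ring H] [Algebra k H]
variable {C : Type} [AddCommGroup C] [Module k C]
variable {M : Type} [AddCommGroup M] [Module k M]

/-- Comultiplication at slot `i`: `c_0 ⊗ ⋯ ⊗ c_n ↦ c_0 ⊗ ⋯ ⊗ c_i⁽¹⁾ ⊗ c_i⁽²⁾ ⊗ ⋯ ⊗ c_n`. -/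
noncomputable def coface (ΔC : C →ₗ[k] C ⊗[k] C) :
    (n : ℕ) → (i : ℕ) → (↥(Tpow (k := k) C n) →ₗ[k] ↥(Tpow (k := k) C (n+1)))
  | 0, _ => ΔC
  | n+1, 0 =>
    (TensorProduct.assoc k C C ↥(Tpow (k := k) C n)).toLinearMap ∘ₗ
      (TensorProduct.map ΔC LinearMap.id)
  | n+1, i+1 => TensorProduct.map LinearMap.id (coface ΔC n i)

/-- Counit at slot `j`: `c_0 ⊗ ⋯ ⊗ c_{n+1} ↦ ε(c_j) c_0 ⊗ ⋯ ĉ_j ⋯ ⊗ c_{n+1}`. -/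
noncomputable def dropC (εC : C →ₗ[k] k) :
    (n : ℕ) → (j : ℕ) → (↥(Tpow (k := k) C (n+1)) →ₗ[k] ↥(Tpow (k := k) C n))
  | n, 0 =>
    (TensorProduct.lid k ↥(Tpow (k := k) C n)).toLinearMap ∘ₗ
      (TensorProduct.map εC LinearMap.id)
  | 0, _+1 =>
    (TensorProduct.lid k C).toLinearMap ∘ₗ (TensorProduct.map εC LinearMap.id)
  | n+1, j+1 => TensorProduct.map LinearMap.id (dropC εC n j)

/-- The face maps `δ_i : M ⊗ C^{⊗(n+1)} → M ⊗ C^{⊗(n+2)}`, `0 ≤ i ≤ n+1`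
(the last one being the flip-over face `δ_{n+1} = τ_{n+1} ∘ δ_0`). -/
noncomputable def faceMap (ΔC : C →ₗ[k] C ⊗[k] C) (actC : H →ₗ[k] C →ₗ[k] C)
    (coactM : M →ₗ[k] H ⊗[k] M) (n i : ℕ) :
    M ⊗[k] ↥(Tpow (k := k) C n) →ₗ[k] M ⊗[k] ↥(Tpow (k := k) C (n+1)) :=
  if i = n + 1 then
    (cyc actC coactM (n+1)) ∘ₗ (TensorProduct.map LinearMap.id (coface ΔC n 0))
  else TensorProduct.map LinearMap.id (coface ΔC n i)

/-- The degeneracy maps `σ_i : M ⊗ C^{⊗(n+2)} → M ⊗ C^{⊗(n+1)}`, `0 ≤ i ≤ n`,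
applying the counit in slot `i+1`. -/
noncomputable def degenMap (εC : C →ₗ[k] k) (n i : ℕ) :
    M ⊗[k] ↥(Tpow (k := k) C (n+1)) →ₗ[k] M ⊗[k] ↥(Tpow (k := k) C n) :=
  TensorProduct.map LinearMap.id (dropC εC n (i+1))

end HC


namespace HC

variable {k : Type} [Field k]
variable {H : Type} [Ring H] [Algebra k H]
variable {M : Type} [AddCommGroup M] [Module k M]

section AlgSide

variable {A : Type} [Ring A] [Algebra k A]

/-- Splitting off the last tensor factor: `A^{⊗(n+2)} ≅ A^{⊗(n+1)} ⊗ A`. -/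
noncomputable def unsnoc {C : Type} [AddCommGroup C] [Module k C] :
    (n : ℕ) → (↥(Tpow (k := k) C (n+1)) ≃ₗ[k] ↥(Tpow (k := k) C n) ⊗[k] C)
  | 0 => LinearEquiv.refl k (C ⊗[k] C)
  | n + 1 =>
    (TensorProduct.congr (LinearEquiv.refl k C) (unsnoc n)).trans
      (TensorProduct.assoc k C ↥(Tpow (k := k) C n) C).symm

/-- Multiplication of the adjacent slots `i, i+1`. -/
noncomputable def mulAt :
    (n : ℕ) → (i : ℕ) → (↥(Tpow (k := k) A (n+1)) →ₗ[k] ↥(Tpow (k := k) A n))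
  | 0, _ => LinearMap.mul' k A
  | n+1, 0 =>
    (TensorProduct.map (LinearMap.mul' k A) LinearMap.id) ∘ₗ
      (TensorProduct.assoc k A A ↥(Tpow (k := k) A n)).symm.toLinearMap
  | n+1, i+1 => TensorProduct.map LinearMap.id (mulAt n i)

/-- The cyclic rotation `a_0 ⊗ ⋯ ⊗ a_n ↦ a_n ⊗ a_0 ⊗ ⋯ ⊗ a_{n-1}`. -/
noncomputable def rot : (n : ℕ) → (↥(Tpow (k := k) A n) →ₗ[k] ↥(Tpow (k := k) A n))
  | 0 => LinearMap.id
  | n + 1 =>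
    (TensorProduct.comm k ↥(Tpow (k := k) A n) A).toLinearMap ∘ₗ
      (unsnoc n).toLinearMap

/-- The face operators of the ordinary cyclic cochain complex of `A`. -/
noncomputable def Dord (n i : ℕ) (f : ↥(Tpow (k := k) A n) →ₗ[k] k) :
    ↥(Tpow (k := k) A (n+1)) →ₗ[k] k :=
  if i = n + 1 then f ∘ₗ (mulAt n 0) ∘ₗ (rot (n+1)) else f ∘ₗ mulAt n i

/-- The Hochschild coboundary of the ordinary cyclic complex of `A`. -/
noncomputable def bord (n : ℕ) (f : ↥(Tpow (k := k) A n) →ₗ[k] k) :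
    ↥(Tpow (k := k) A (n+1)) →ₗ[k] k :=
  ∑ i ∈ Finset.range (n + 2), ((-1 : k) ^ i) • Dord n i f

/-- `A` is a left `H`-module algebra. -/
def IsModAlg (Δ : H →ₗ[k] H ⊗[k] H) (ε : H →ₗ[k] k)
    (actA : H →ₗ[k] A →ₗ[k] A) : Prop :=
  (∀ (h : H) (x y : A) (s : Finset ℕ) (p q : ℕ → H),
    Δ h = ∑ i ∈ s, p i ⊗ₜ q i →
    actA h (x * y) = ∑ i ∈ s, actA (p i) x * actA (q i) y) ∧
  (∀ h : H, actA h 1 = ε h • (1 : A))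

/-- The right `H`-action `(m ⊗ ã) h = m h⁽¹⁾ ⊗ S(h⁽²⁾) ã` on `M ⊗ A^{⊗(n+1)}`. -/
noncomputable def rAct (Δ : H →ₗ[k] H ⊗[k] H) (S : H →ₗ[k] H)
    (actA : H →ₗ[k] A →ₗ[k] A) (actM : H →ₗ[k] M →ₗ[k] M) (n : ℕ) :
    (M ⊗[k] ↥(Tpow (k := k) A n)) ⊗[k] H →ₗ[k] M ⊗[k] ↥(Tpow (k := k) A n) :=
  (TensorProduct.map (TensorProduct.lift (LinearMap.flip actM))
      ((dAct Δ actA n) ∘ₗ (TensorProduct.map S LinearMap.id) ∘ₗ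
        (TensorProduct.comm k ↥(Tpow (k := k) A n) H).toLinearMap)) ∘ₗ
    (TensorProduct.tensorTensorTensorComm k M ↥(Tpow (k := k) A n) H H).toLinearMap ∘ₗ
    (TensorProduct.map LinearMap.id Δ)

/-- `H`-equivariance of a functional on `M ⊗ A^{⊗(n+1)}`. -/
def EquivFn (Δ : H →ₗ[k] H ⊗[k] H) (ε : H →ₗ[k] k) (S : H →ₗ[k] H)
    (actA : H →ₗ[k] A →ₗ[k] A) (actM : H →ₗ[k] M →ₗ[k] M) (n : ℕ)
    (f : M ⊗[k] ↥(Tpow (k := k) A n) →ₗ[k] k) : Prop :=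
  ∀ (z : M ⊗[k] ↥(Tpow (k := k) A n)) (h : H),
    f (rAct Δ S actA actM n (z ⊗ₜ h)) = ε h * f z

end AlgSide

section Pairing

variable {C : Type} [AddCommGroup C] [Module k C]
variable {A : Type} [Ring A] [Algebra k A]

/-- The evaluation `A^{⊗(n+1)}`-multilinear pairing
`(c_0 ⊗ ⋯ ⊗ c_n) ⊗ (a_0 ⊗ ⋯ ⊗ a_n) ↦ (c_0 a_0)(c_1 a_1)⋯(c_n a_n)`
induced by an action `C ⊗ A → A`. -/
noncomputable def ev (actCA : C →ₗ[k] A →ₗ[k] A) :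
    (n : ℕ) → (↥(Tpow (k := k) C n) ⊗[k] ↥(Tpow (k := k) A n) →ₗ[k] A)
  | 0 => TensorProduct.lift actCA
  | n + 1 =>
    (LinearMap.mul' k A) ∘ₗ
      (TensorProduct.map (TensorProduct.lift actCA) (ev actCA n)) ∘ₗ
      (TensorProduct.tensorTensorTensorComm k C ↥(Tpow (k := k) C n) A
        ↥(Tpow (k := k) A n)).toLinearMap

/-- The pairing `(x, f) ↦ x # f`:
`((m ⊗ c_0 ⊗ ⋯ ⊗ c_n) # f)(a_0 ⊗ ⋯ ⊗ a_n) = f(m ⊗ (c_0a_0)⋯(c_na_n))`. -/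
noncomputable def pairFn (actCA : C →ₗ[k] A →ₗ[k] A) (n : ℕ)
    (f : M ⊗[k] A →ₗ[k] k) (x : M ⊗[k] ↥(Tpow (k := k) C n)) :
    ↥(Tpow (k := k) A n) →ₗ[k] k :=
  (TensorProduct.curry
    (f ∘ₗ (TensorProduct.map LinearMap.id (ev actCA n)) ∘ₗ
      (TensorProduct.assoc k M ↥(Tpow (k := k) C n) ↥(Tpow (k := k) A n)).toLinearMap)) x

/-- The Hochschild boundary `b = ∑ (-1)^i δ_i` of the Hopf-cyclic complex of a
module coalgebra with coefficients. -/
noncomputable def bC (ΔC : C →ₗ[k] C ⊗[k] C) (actC : H →ₗ[k] C →ₗ[k] C)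
    (coactM : M →ₗ[k] H ⊗[k] M) (n : ℕ) :
    M ⊗[k] ↥(Tpow (k := k) C n) →ₗ[k] M ⊗[k] ↥(Tpow (k := k) C (n+1)) :=
  ∑ i ∈ Finset.range (n + 2), ((-1 : k) ^ i) • faceMap ΔC actC coactM n i

end Pairing

end HC

namespace HC

variable {k : Type} [Field k]
variable {H : Type} [Ring H] [Algebra k H]
variable {M : Type} [AddCommGroup M] [Module k M]
variable {A : Type} [Ring A] [Algebra k A]

/-- The twisted cyclic operator
`m ⊗ a_0 ⊗ ⋯ ⊗ a_n ↦ m⁽⁰⁾ ⊗ (S⁻¹(m⁽⁻¹⁾) a_n) ⊗ a_0 ⊗ ⋯ ⊗ a_{n-1}`. -/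
noncomputable def cycA (Sinv : H →ₗ[k] H) (actA : H →ₗ[k] A →ₗ[k] A)
    (coactM : M →ₗ[k] H ⊗[k] M) :
    (n : ℕ) → (M ⊗[k] ↥(Tpow (k := k) A n) →ₗ[k] M ⊗[k] ↥(Tpow (k := k) A n))
  | 0 =>
    (TensorProduct.map LinearMap.id (TensorProduct.lift actA)) ∘ₗ
      (TensorProduct.assoc k M H A).toLinearMap ∘ₗ
      (TensorProduct.map
        (((TensorProduct.comm k H M).toLinearMap) ∘ₗ
          (TensorProduct.map Sinv LinearMap.id) ∘ₗ coactM) LinearMap.id)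
  | n + 1 =>
    (TensorProduct.map LinearMap.id
        (TensorProduct.comm k ↥(Tpow (k := k) A n) A).toLinearMap) ∘ₗ
      (TensorProduct.assoc k M ↥(Tpow (k := k) A n) A).toLinearMap ∘ₗ
      (TensorProduct.map LinearMap.id (TensorProduct.lift actA)) ∘ₗ
      (TensorProduct.tensorTensorTensorComm k M H
        ↥(Tpow (k := k) A n) A).toLinearMap ∘ₗ
      (TensorProduct.map
        (((TensorProduct.comm k H M).toLinearMap) ∘ₗ
          (TensorProduct.map Sinv LinearMap.id) ∘ₗ coactM) LinearMap.id) ∘ₗ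
      (TensorProduct.map LinearMap.id (unsnoc n).toLinearMap)

/-- Face operators on the Hopf-cyclic cochain complex of the module algebra `A`. -/
noncomputable def Dop (Sinv : H →ₗ[k] H) (actA : H →ₗ[k] A →ₗ[k] A)
    (coactM : M →ₗ[k] H ⊗[k] M) (n i : ℕ)
    (f : M ⊗[k] ↥(Tpow (k := k) A n) →ₗ[k] k) :
    M ⊗[k] ↥(Tpow (k := k) A (n+1)) →ₗ[k] k :=
  if i = n + 1 then
    f ∘ₗ (TensorProduct.map LinearMap.id (mulAt n 0)) ∘ₗ cycA Sinv actA coactM (n+1)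
  else f ∘ₗ (TensorProduct.map LinearMap.id (mulAt n i))

/-- The cyclic operator on cochains of the module algebra `A`. -/
noncomputable def Top (Sinv : H →ₗ[k] H) (actA : H →ₗ[k] A →ₗ[k] A)
    (coactM : M →ₗ[k] H ⊗[k] M) (n : ℕ)
    (f : M ⊗[k] ↥(Tpow (k := k) A n) →ₗ[k] k) :
    M ⊗[k] ↥(Tpow (k := k) A n) →ₗ[k] k :=
  f ∘ₗ cycA Sinv actA coactM n

end HC

open HC TensorProduct

/-!
Write `ev (c ⊗ a) = (c₀a₀)⋯(cₙaₙ)`, so that `(x # f)(a) = f(m ⊗ ev(c ⊗ a))` for `x = m ⊗ c`.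
Because `C` measures `A`, `ev` turns the cofaces of `C` into multiplications of adjacent
factors of `A`; because the `C`-action is `H`-linear, it turns the diagonal `H`-action on
`C^{⊗(n+1)}` into the `H`-action on `A`. Equivariance of `f` then makes `x ↦ x # f` vanish on
the relations defining `M ⊗_H C^{⊗(n+1)}`. Closedness of `f`, together with coassociativity of
the coaction and `S⁻¹(h⁽²⁾)h⁽¹⁾ = ε(h)`, gives the twisted trace property
`f(m ⊗ ab) = f(m⁽⁰⁾ ⊗ b (m⁽⁻¹⁾a))`, which turns the cyclic operator of `C` into the cyclic
rotation on `A`. So `x ↦ x # f` maps `b` to `b` and `τ` to `λ`: it sends cyclic cocycles to cyclic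
cocycles and `b y` to `b (y # f)`.
-/

namespace HC

section Representations

variable {R : Type} [CommSemiring R]

theorem exists_sum_range_tmul {P Q : Type} [AddCommMonoid P] [Module R P]
    [AddCommMonoid Q] [Module R Q] (z : P ⊗[R] Q) :
    ∃ (u : Finset ℕ) (p : ℕ → P) (q : ℕ → Q), z = ∑ i ∈ u, p i ⊗ₜ q i := by
  obtain ⟨S, rfl⟩ := TensorProduct.exists_finset z
  let g : ℕ → P × Q := fun i => if h : i < S.card then (S.equivFin.symm ⟨i, h⟩).1 else 0
  refine ⟨Finset.range S.card, fun i => (g i).1, fun i => (g i).2, ?_⟩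
  rw [Finset.sum_range, ← Finset.sum_coe_sort S, ← S.equivFin.symm.sum_comp]
  simp [g]

open Coalgebra

theorem sum_counit_right_smul {C : Type} [AddCommMonoid C] [Module R C] [Coalgebra R C] {c : C}
    {ι : Type} (𝓡 : Repr R c ι) : ∑ i ∈ 𝓡.index, counit (R := R) (𝓡.right i) • 𝓡.left i = c := by
  simpa only [map_sum, rid_tmul, one_smul] using
    congr(TensorProduct.rid R C $(sum_tmul_counit_eq 𝓡))

theorem sum_invAntipode_right_mul {H : Type} [Semiring H] [HopfAlgebra R H] {Sinv : H →ₗ[R] H}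
    (hS : ∀ g : H, Sinv (HopfAlgebra.antipode R g) = g)
    (hS' : ∀ g : H, HopfAlgebra.antipode R (Sinv g) = g) {h : H} {ι : Type} (𝓡 : Repr R h ι) :
    ∑ i ∈ 𝓡.index, Sinv (𝓡.right i) * 𝓡.left i = counit (R := R) h • (1 : H) := by
  apply Function.LeftInverse.injective hS
  simp only [map_sum, HopfAlgebra.antipode_mul_antidistrib, hS', map_smul,
    HopfAlgebra.antipode_one]
  exact HopfAlgebra.sum_antipode_mul_eq_smul 𝓡

end Representations

section Coaction

variable {k : Type} [Field k] {H : Type} [Ring H] [Algebra k H]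
variable {M : Type} [AddCommGroup M] [Module k M]
variable {Δ : H →ₗ[k] H ⊗[k] H} {ε : H →ₗ[k] k} {coactM : M →ₗ[k] H ⊗[k] M}

theorem IsLCoact.sum_counit_smul (hco : IsLCoact Δ ε coactM) {ι : Type} {u : Finset ι}
    {e : ι → H} {m0 : ι → M} {m : M} (hrep : coactM m = ∑ l ∈ u, e l ⊗ₜ m0 l) :
    ∑ l ∈ u, ε (e l) • m0 l = m := by
  simpa [hrep, map_sum] using hco.2 m

theorem IsLCoact.sum_comul_tmul (hco : IsLCoact Δ ε coactM) {m : M}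
    {ι : Type} {u : Finset ι} {e : ι → H} {m0 : ι → M}
    (hrep : coactM m = ∑ l ∈ u, e l ⊗ₜ m0 l)
    {ι₂ : Type} {t : ι → Finset ι₂} {e1 e2 : ι → ι₂ → H}
    (he : ∀ l, Δ (e l) = ∑ j ∈ t l, e1 l j ⊗ₜ e2 l j)
    {ι₃ : Type} {s : ι → Finset ι₃} {g : ι → ι₃ → H} {m' : ι → ι₃ → M}
    (hm : ∀ l, coactM (m0 l) = ∑ j ∈ s l, g l j ⊗ₜ m' l j) :
    ∑ l ∈ u, ∑ j ∈ t l, (e1 l j ⊗ₜ[k] e2 l j) ⊗ₜ[k] m0 l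
      = ∑ l ∈ u, ∑ j ∈ s l, (e l ⊗ₜ[k] g l j) ⊗ₜ[k] m' l j := by
  have key := LinearMap.congr_fun hco.1 m
  simp only [LinearMap.comp_apply, LinearEquiv.coe_coe, hrep, map_sum, map_tmul,
    LinearMap.id_apply, he, hm, sum_tmul, tmul_sum, assoc_symm_tmul] at key
  exact key

end Coaction

section TensorPower

variable {k : Type} [Field k]
variable {C : Type} [AddCommGroup C] [Module k C]
variable {A : Type} [Ring A] [Algebra k A]

/- `c ⊗ₜ x` typed in `Tpow C (n+1)` rather than in `C ⊗ Tpow C n`: the two types are only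
definitionally equal, and rewriting under the maps out of `Tpow C (n+1)` needs the former. -/
noncomputable def Tpow.cons {n : ℕ} (c : C) (x : ↥(Tpow (k := k) C n)) :
    ↥(Tpow (k := k) C (n+1)) :=
  c ⊗ₜ x

theorem Tpow.induction_on_succ {n : ℕ} {P : ↥(Tpow (k := k) C (n+1)) → Prop}
    (x : ↥(Tpow (k := k) C (n+1))) (zero : P 0)
    (cons : ∀ (c : C) (y : ↥(Tpow (k := k) C n)), P (Tpow.cons c y))
    (add : ∀ x y, P x → P y → P (x + y)) : P x :=
  TensorProduct.induction_on x zero cons add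

theorem Tpow.induction_on_one {P : ↥(Tpow (k := k) C 1) → Prop}
    (x : ↥(Tpow (k := k) C 1)) (zero : P 0)
    (cons : ∀ c c' : C, P (Tpow.cons (n := 0) c c'))
    (add : ∀ x y, P x → P y → P (x + y)) : P x :=
  TensorProduct.induction_on x zero cons add

@[simp]
theorem Tpow.cons_zero {n : ℕ} (c : C) : Tpow.cons c (0 : ↥(Tpow (k := k) C n)) = 0 :=
  tmul_zero _ _

theorem Tpow.cons_add {n : ℕ} (c : C) (x y : ↥(Tpow (k := k) C n)) :
    Tpow.cons c (x + y) = Tpow.cons c x + Tpow.cons c y :=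
  tmul_add _ _ _

theorem coface_zero_eq_sum {ΔC : C →ₗ[k] C ⊗[k] C} {u : Finset ℕ} {c1 c2 : ℕ → C} {c : C}
    (hc : ΔC c = ∑ j ∈ u, c1 j ⊗ₜ c2 j) (i : ℕ) :
    coface ΔC 0 i c = ∑ j ∈ u, Tpow.cons (k := k) (n := 0) (c1 j) (c2 j) :=
  hc

theorem coface_succ_zero_cons {ΔC : C →ₗ[k] C ⊗[k] C} {u : Finset ℕ} {c1 c2 : ℕ → C} {c : C}
    (hc : ΔC c = ∑ j ∈ u, c1 j ⊗ₜ c2 j) {n : ℕ} (x : ↥(Tpow (k := k) C n)) :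
    coface ΔC (n+1) 0 (Tpow.cons c x) = ∑ j ∈ u, Tpow.cons (c1 j) (Tpow.cons (c2 j) x) := by
  change TensorProduct.assoc k C C _ (ΔC c ⊗ₜ x) = _
  rw [hc, sum_tmul, map_sum]
  rfl

theorem coface_succ_succ_cons (ΔC : C →ₗ[k] C ⊗[k] C) (n i : ℕ) (c : C)
    (x : ↥(Tpow (k := k) C n)) :
    coface ΔC (n+1) (i+1) (Tpow.cons c x) = Tpow.cons c (coface ΔC n i x) := rfl

theorem mulAt_zero_cons (i : ℕ) (a b : A) : mulAt (k := k) 0 i (Tpow.cons a b) = a * b := rfl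

theorem mulAt_succ_zero_cons (n : ℕ) (a b : A) (y : ↥(Tpow (k := k) A n)) :
    mulAt (n+1) 0 (Tpow.cons a (Tpow.cons b y)) = Tpow.cons (a * b) y := rfl

theorem mulAt_succ_succ_cons (n i : ℕ) (a : A) (y : ↥(Tpow (k := k) A (n+1))) :
    mulAt (n+1) (i+1) (Tpow.cons a y) = Tpow.cons a (mulAt n i y) := rfl

def MeasuresMul (ΔC : C →ₗ[k] C ⊗[k] C) (actCA : C →ₗ[k] A →ₗ[k] A) : Prop :=
  ∀ (c : C) (x y : A) (u : Finset ℕ) (c1 c2 : ℕ → C),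
    ΔC c = ∑ j ∈ u, c1 j ⊗ₜ c2 j → actCA c (x * y) = ∑ j ∈ u, actCA (c1 j) x * actCA (c2 j) y

variable (actCA : C →ₗ[k] A →ₗ[k] A)

theorem ev_cons_tmul_cons (n : ℕ) (c : C) (x : ↥(Tpow (k := k) C n)) (a : A)
    (y : ↥(Tpow (k := k) A n)) :
    ev actCA (n+1) (Tpow.cons c x ⊗ₜ Tpow.cons a y) = actCA c a * ev actCA n (x ⊗ₜ y) := rfl

theorem ev_coface_tmul {ΔC : C →ₗ[k] C ⊗[k] C} (hCA : MeasuresMul ΔC actCA) (n i : ℕ)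
    (x : ↥(Tpow (k := k) C n)) (y : ↥(Tpow (k := k) A (n+1))) :
    ev actCA (n+1) (coface ΔC n i x ⊗ₜ y) = ev actCA n (x ⊗ₜ mulAt n i y) := by
  induction n generalizing i with
  | zero =>
    induction y using Tpow.induction_on_one with
    | zero => simp
    | add y₁ y₂ h₁ h₂ => simp only [tmul_add, map_add, h₁, h₂]
    | cons a b =>
      obtain ⟨u, c1, c2, hc⟩ := exists_sum_range_tmul (ΔC x)
      rw [coface_zero_eq_sum hc, sum_tmul, map_sum, mulAt_zero_cons]
      exact (hCA x a b u c1 c2 hc).symm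
  | succ n ih =>
    induction x using Tpow.induction_on_succ with
    | zero => simp
    | add x₁ x₂ h₁ h₂ => simp only [map_add, add_tmul, h₁, h₂]
    | cons c x =>
    induction y using Tpow.induction_on_succ with
    | zero => simp
    | add y₁ y₂ h₁ h₂ => simp only [tmul_add, map_add, h₁, h₂]
    | cons a y =>
    cases i with
    | succ i =>
      rw [coface_succ_succ_cons, mulAt_succ_succ_cons, ev_cons_tmul_cons, ev_cons_tmul_cons, ih]
    | zero =>
      induction y using Tpow.induction_on_succ with
      | zero => simp
      | add y₁ y₂ h₁ h₂ => simp only [Tpow.cons_add, tmul_add, map_add, h₁, h₂]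
      | cons b y =>
        obtain ⟨u, c1, c2, hc⟩ := exists_sum_range_tmul (ΔC c)
        rw [coface_succ_zero_cons hc, mulAt_succ_zero_cons, ev_cons_tmul_cons,
          hCA c a b u c1 c2 hc, sum_tmul, map_sum, Finset.sum_mul]
        simp only [ev_cons_tmul_cons, mul_assoc]

theorem snoc_cons_tmul (n : ℕ) (c₀ : C) (x : ↥(Tpow (k := k) C n)) (c : C) :
    snoc (n+1) (Tpow.cons c₀ x ⊗ₜ c) = Tpow.cons c₀ (snoc n (x ⊗ₜ c)) := rfl

theorem unsnoc_symm_cons_tmul (n : ℕ) (a₀ : A) (y : ↥(Tpow (k := k) A n)) (a : A) :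
    (unsnoc (C := A) (n+1)).symm (Tpow.cons a₀ y ⊗ₜ a) =
      Tpow.cons a₀ ((unsnoc (C := A) n).symm (y ⊗ₜ a)) := rfl

theorem ev_snoc_tmul_unsnoc_symm (n : ℕ) (x : ↥(Tpow (k := k) C n)) (c : C)
    (y : ↥(Tpow (k := k) A n)) (a : A) :
    ev actCA (n+1) (snoc n (x ⊗ₜ c) ⊗ₜ (unsnoc (C := A) n).symm (y ⊗ₜ a))
      = ev actCA n (x ⊗ₜ y) * actCA c a := by
  induction n with
  | zero => rfl
  | succ n ih =>
    induction x using Tpow.induction_on_succ with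
    | zero => simp
    | add x₁ x₂ h₁ h₂ => simp only [add_tmul, map_add, h₁, h₂, add_mul]
    | cons c₀ x =>
    induction y using Tpow.induction_on_succ with
    | zero => simp
    | add y₁ y₂ h₁ h₂ => simp only [add_tmul, tmul_add, map_add, h₁, h₂, add_mul]
    | cons a₀ y =>
      rw [snoc_cons_tmul, unsnoc_symm_cons_tmul, ev_cons_tmul_cons, ih, ev_cons_tmul_cons,
        mul_assoc]

theorem dAct_succ_cons {H : Type} [Ring H] [Algebra k H] {Δ : H →ₗ[k] H ⊗[k] H}
    (actC : H →ₗ[k] C →ₗ[k] C) {ι : Type} {u : Finset ι} {p q : ι → H} {h : H}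
    (hrep : Δ h = ∑ i ∈ u, p i ⊗ₜ q i) {n : ℕ} (c : C) (x : ↥(Tpow (k := k) C n)) :
    dAct Δ actC (n+1) (h ⊗ₜ Tpow.cons c x)
      = ∑ i ∈ u, Tpow.cons (actC (p i) c) (dAct Δ actC n (q i ⊗ₜ x)) := by
  change (TensorProduct.map (TensorProduct.lift actC) (dAct Δ actC n) ∘ₗ
    (tensorTensorTensorComm k H H C _).toLinearMap) (Δ h ⊗ₜ (c ⊗ₜ x)) = _
  rw [hrep, sum_tmul, map_sum]
  rfl

theorem ev_dAct_tmul {H : Type} [Ring H] [Algebra k H] {Δ : H →ₗ[k] H ⊗[k] H}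
    {actC : H →ₗ[k] C →ₗ[k] C} {actA : H →ₗ[k] A →ₗ[k] A}
    (hCA : ∀ (h : H) (c : C) (a : A), actCA (actC h c) a = actA h (actCA c a))
    (hA : ∀ (h : H) (x y : A) (u : Finset ℕ) (p q : ℕ → H),
      Δ h = ∑ i ∈ u, p i ⊗ₜ q i → actA h (x * y) = ∑ i ∈ u, actA (p i) x * actA (q i) y)
    (n : ℕ) (h : H) (x : ↥(Tpow (k := k) C n)) (a : ↥(Tpow (k := k) A n)) :
    ev actCA n (dAct Δ actC n (h ⊗ₜ x) ⊗ₜ a) = actA h (ev actCA n (x ⊗ₜ a)) := by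
  induction n generalizing h with
  | zero => exact hCA h x a
  | succ n ih =>
    induction x using Tpow.induction_on_succ with
    | zero => simp
    | add x₁ x₂ h₁ h₂ => simp only [tmul_add, add_tmul, map_add, h₁, h₂]
    | cons c x =>
    induction a using Tpow.induction_on_succ with
    | zero => simp
    | add a₁ a₂ h₁ h₂ => simp only [tmul_add, map_add, h₁, h₂]
    | cons a₀ a =>
      obtain ⟨u, p, q, hpq⟩ := exists_sum_range_tmul (Δ h)
      rw [dAct_succ_cons actC hpq, sum_tmul, map_sum, ev_cons_tmul_cons, hA _ _ _ u p q hpq]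
      simp only [ev_cons_tmul_cons, hCA, ih]

end TensorPower

section Pairing

variable {k : Type} [Field k]
variable {M : Type} [AddCommGroup M] [Module k M]
variable {C : Type} [AddCommGroup C] [Module k C]
variable {A : Type} [Ring A] [Algebra k A]

noncomputable def pairing (actCA : C →ₗ[k] A →ₗ[k] A) (n : ℕ) (f : M ⊗[k] A →ₗ[k] k) :
    M ⊗[k] ↥(Tpow (k := k) C n) →ₗ[k] ↥(Tpow (k := k) A n) →ₗ[k] k :=
  TensorProduct.curry (f ∘ₗ TensorProduct.map LinearMap.id (ev actCA n) ∘ₗ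
    (TensorProduct.assoc k M _ _).toLinearMap)

variable (actCA : C →ₗ[k] A →ₗ[k] A) (f : M ⊗[k] A →ₗ[k] k)

theorem pairing_tmul_apply (n : ℕ) (m : M) (x : ↥(Tpow (k := k) C n))
    (y : ↥(Tpow (k := k) A n)) :
    pairing actCA n f (m ⊗ₜ x) y = f (m ⊗ₜ ev actCA n (x ⊗ₜ y)) := rfl

theorem pairing_map_coface {ΔC : C →ₗ[k] C ⊗[k] C} (hCA : MeasuresMul ΔC actCA) (n i : ℕ)
    (x : M ⊗[k] ↥(Tpow (k := k) C n)) :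
    pairing actCA (n+1) f (TensorProduct.map LinearMap.id (coface ΔC n i) x)
      = pairing actCA n f x ∘ₗ mulAt n i := by
  induction x using TensorProduct.induction_on with
  | zero => simp
  | add x₁ x₂ h₁ h₂ => simp only [map_add, h₁, h₂, LinearMap.add_comp]
  | tmul m ξ =>
    ext y
    simp only [map_tmul, LinearMap.id_apply, pairing_tmul_apply, LinearMap.comp_apply,
      ev_coface_tmul actCA hCA]

theorem rot_succ_unsnoc_symm (n : ℕ) (y : ↥(Tpow (k := k) A n)) (a : A) :
    rot (n+1) ((unsnoc (C := A) n).symm (y ⊗ₜ a)) = Tpow.cons a y := by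
  change TensorProduct.comm k _ A (unsnoc n ((unsnoc n).symm (y ⊗ₜ a))) = _
  rw [LinearEquiv.apply_symm_apply]
  rfl

variable {H : Type} [Ring H] [Algebra k H]

-- The sum is typed in `M ⊗ Tpow C 0`, not `M ⊗ C`, so that `map_sum` applies under `pairing`.
theorem cyc_zero_tmul (actC : H →ₗ[k] C →ₗ[k] C) {coactM : M →ₗ[k] H ⊗[k] M}
    {ι : Type} {u : Finset ι} {e : ι → H} {m0 : ι → M} {m : M}
    (hrep : coactM m = ∑ l ∈ u, e l ⊗ₜ m0 l) (c : ↥(Tpow (k := k) C 0)) :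
    cyc actC coactM 0 (m ⊗ₜ c) =
      Finset.sum (M := M ⊗[k] ↥(Tpow (k := k) C 0)) u fun l => m0 l ⊗ₜ actC (e l) c := by
  change (TensorProduct.map LinearMap.id (TensorProduct.lift actC) ∘ₗ
    (TensorProduct.assoc k M H C).toLinearMap ∘ₗ
    TensorProduct.map (TensorProduct.comm k H M).toLinearMap LinearMap.id ∘ₗ
    (TensorProduct.mk k (H ⊗[k] M) C).flip c) (coactM m) = _
  rw [hrep, map_sum]
  rfl

theorem cyc_succ_tmul_cons (actC : H →ₗ[k] C →ₗ[k] C) {coactM : M →ₗ[k] H ⊗[k] M}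
    {ι : Type} {u : Finset ι} {e : ι → H} {m0 : ι → M} {m : M}
    (hrep : coactM m = ∑ l ∈ u, e l ⊗ₜ m0 l) {n : ℕ} (c : C) (x : ↥(Tpow (k := k) C n)) :
    cyc actC coactM (n+1) (m ⊗ₜ Tpow.cons c x)
      = ∑ l ∈ u, m0 l ⊗ₜ snoc n (x ⊗ₜ actC (e l) c) := by
  change (TensorProduct.map LinearMap.id
      (snoc n ∘ₗ (TensorProduct.comm k C _).toLinearMap) ∘ₗ
    (TensorProduct.leftComm k C M _).toLinearMap ∘ₗ
    TensorProduct.map (TensorProduct.lift actC) LinearMap.id ∘ₗ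
    (tensorTensorTensorComm k H M C _).toLinearMap) (coactM m ⊗ₜ (c ⊗ₜ x)) = _
  rw [hrep, sum_tmul, map_sum]
  rfl

theorem rAct_zero_tmul (Δ : H →ₗ[k] H ⊗[k] H)
    (S : H →ₗ[k] H) (actA : H →ₗ[k] A →ₗ[k] A) (actM : H →ₗ[k] M →ₗ[k] M)
    {ι : Type} {u : Finset ι} {p q : ι → H} {h : H} (hrep : Δ h = ∑ i ∈ u, p i ⊗ₜ q i)
    (m : M) (a : A) :
    rAct Δ S actA actM 0 ((m ⊗ₜ a) ⊗ₜ h) = ∑ i ∈ u, actM (p i) m ⊗ₜ actA (S (q i)) a := by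
  simp only [rAct, LinearMap.comp_apply, map_tmul, LinearMap.id_apply, hrep, tmul_sum,
    map_sum, LinearEquiv.coe_coe]
  rfl

end Pairing

section HopfCyclic

open Coalgebra

variable {k : Type} [Field k]
variable {M : Type} [AddCommGroup M] [Module k M]
variable {C : Type} [AddCommGroup C] [Module k C]
variable {A : Type} [Ring A] [Algebra k A]
variable {H : Type} [Ring H] [HopfAlgebra k H]

local notation "S" => HopfAlgebra.antipode (R := k) (A := H)
local notation "Δ" => Coalgebra.comul (R := k) (A := H)
local notation "ε" => Coalgebra.counit (R := k) (A := H)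

variable {actC : H →ₗ[k] C →ₗ[k] C} {actA : H →ₗ[k] A →ₗ[k] A}
variable {actM : H →ₗ[k] M →ₗ[k] M} {coactM : M →ₗ[k] H ⊗[k] M}
variable {actCA : C →ₗ[k] A →ₗ[k] A} {f : M ⊗[k] A →ₗ[k] k}

theorem EquivFn.sum_apply_tmul (hf : EquivFn Δ ε S actA actM 0 f) {ι : Type} {u : Finset ι}
    {p q : ι → H} {h : H} (hrep : Δ h = ∑ i ∈ u, p i ⊗ₜ q i) (m : M) (a : A) :
    ∑ i ∈ u, f (actM (p i) m ⊗ₜ actA (S (q i)) a) = ε h * f (m ⊗ₜ a) := by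
  have := hf (m ⊗ₜ a) h
  rw [rAct_zero_tmul Δ S actA actM hrep] at this
  exact (map_sum f _ _).symm.trans this

-- `f (mh ⊗ a) = f ((m ⊗ h⁽²⁾a) h⁽¹⁾)` by coassociativity and `S(h⁽¹⁾)h⁽²⁾ = ε(h)`.
theorem EquivFn.apply_actM_tmul (hf : EquivFn Δ ε S actA actM 0 f) (hactA : IsLAct actA)
    (h : H) (m : M) (a : A) : f (actM h m ⊗ₜ a) = f (m ⊗ₜ actA h a) := by
  set 𝓡 := ℛ k h
  let G : H ⊗[k] (H ⊗[k] H) →ₗ[k] k :=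
    f ∘ₗ TensorProduct.map (actM.flip m)
      (actA.flip a ∘ₗ LinearMap.mul' k H ∘ₗ TensorProduct.map S LinearMap.id)
  have hG : ∀ x y z : H, G (x ⊗ₜ (y ⊗ₜ z)) = f (actM x m ⊗ₜ actA (S y * z) a) :=
    fun _ _ _ => rfl
  have hcoassoc := congr(G $(sum_tmul_tmul_eq 𝓡 (fun i => ℛ k (𝓡.left i))
    (fun i => ℛ k (𝓡.right i))))
  simp only [map_sum, hG] at hcoassoc
  have hleft : ∀ i ∈ 𝓡.index, ∑ j ∈ (ℛ k (𝓡.left i)).index,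
      f (actM ((ℛ k (𝓡.left i)).left j) m ⊗ₜ
        actA (S ((ℛ k (𝓡.left i)).right j) * 𝓡.right i) a)
      = ε (𝓡.left i) * f (m ⊗ₜ actA (𝓡.right i) a) := by
    intro i _
    rw [← hf.sum_apply_tmul (ℛ k (𝓡.left i)).eq.symm]
    simp only [hactA.2, LinearMap.comp_apply]
  have hright : ∀ i ∈ 𝓡.index, ∑ j ∈ (ℛ k (𝓡.right i)).index,
      f (actM (𝓡.left i) m ⊗ₜ
        actA (S ((ℛ k (𝓡.right i)).left j) * (ℛ k (𝓡.right i)).right j) a)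
      = ε (𝓡.right i) * f (actM (𝓡.left i) m ⊗ₜ a) := by
    intro i _
    rw [← map_sum, ← tmul_sum, ← LinearMap.sum_apply, ← map_sum,
      HopfAlgebra.sum_antipode_mul_eq_smul, map_smul, hactA.1]
    simp only [LinearMap.smul_apply, LinearMap.id_apply, tmul_smul, map_smul, smul_eq_mul]
  rw [Finset.sum_congr rfl hleft, Finset.sum_congr rfl hright] at hcoassoc
  conv_lhs => rw [← sum_counit_right_smul 𝓡]
  conv_rhs => rw [← sum_counit_smul 𝓡]
  simpa only [map_sum, map_smul, LinearMap.sum_apply, LinearMap.smul_apply, sum_tmul,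
    tmul_sum, ← smul_tmul', tmul_smul, smul_eq_mul] using hcoassoc.symm

theorem apply_tmul_mul_of_closed {Sinv : H →ₗ[k] H}
    (hclosed : Dop Sinv actA coactM 0 0 f = Dop Sinv actA coactM 0 1 f)
    {ι : Type} {u : Finset ι} {e : ι → H} {m0 : ι → M} {m : M}
    (hrep : coactM m = ∑ l ∈ u, e l ⊗ₜ m0 l) (a b : A) :
    f (m ⊗ₜ (a * b)) = ∑ l ∈ u, f (m0 l ⊗ₜ (actA (Sinv (e l)) b * a)) := by
  have := LinearMap.congr_fun hclosed (m ⊗ₜ (a ⊗ₜ b))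
  change f (m ⊗ₜ (a * b)) =
    (f ∘ₗ TensorProduct.map LinearMap.id (LinearMap.mul' k A) ∘ₗ
      TensorProduct.map LinearMap.id (TensorProduct.comm k A A).toLinearMap ∘ₗ
      (TensorProduct.assoc k M A A).toLinearMap ∘ₗ
      TensorProduct.map LinearMap.id (TensorProduct.lift actA) ∘ₗ
      (tensorTensorTensorComm k M H A A).toLinearMap ∘ₗ
      TensorProduct.map ((TensorProduct.comm k H M).toLinearMap ∘ₗ
        TensorProduct.map Sinv LinearMap.id) LinearMap.id) (coactM m ⊗ₜ (a ⊗ₜ b)) at this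
  rw [this, hrep, sum_tmul, map_sum]
  rfl

-- Closedness applied to `m⁽⁰⁾ ⊗ b (m⁽⁻¹⁾a)` produces `S⁻¹(m⁽⁻¹⁾⁽²⁾) m⁽⁻¹⁾⁽¹⁾ = ε(m⁽⁻¹⁾)`.
theorem apply_tmul_mul_swap_of_closed {Sinv : H →ₗ[k] H} (hS : ∀ g : H, Sinv (S g) = g)
    (hS' : ∀ g : H, S (Sinv g) = g) (hactA : IsLAct actA) (hco : IsLCoact Δ ε coactM)
    (hclosed : Dop Sinv actA coactM 0 0 f = Dop Sinv actA coactM 0 1 f)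
    {ι : Type} {u : Finset ι} {e : ι → H} {m0 : ι → M} {m : M}
    (hrep : coactM m = ∑ l ∈ u, e l ⊗ₜ m0 l) (a b : A) :
    f (m ⊗ₜ (a * b)) = ∑ l ∈ u, f (m0 l ⊗ₜ (b * actA (e l) a)) := by
  choose s g m' hm using fun l => exists_sum_range_tmul (coactM (m0 l))
  let G : (H ⊗[k] H) ⊗[k] M →ₗ[k] k :=
    f ∘ₗ (TensorProduct.comm k A M).toLinearMap ∘ₗ
      TensorProduct.map (LinearMap.mulRight k b ∘ₗ actA.flip a ∘ₗ LinearMap.mul' k H ∘ₗ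
        TensorProduct.map Sinv LinearMap.id ∘ₗ (TensorProduct.comm k H H).toLinearMap)
        LinearMap.id
  have hG : ∀ (x y : H) (z : M), G ((x ⊗ₜ y) ⊗ₜ z) = f (z ⊗ₜ (actA (Sinv y * x) a * b)) :=
    fun _ _ _ => rfl
  have hcoassoc := congr(G $(hco.sum_comul_tmul hrep (fun l => (ℛ k (e l)).eq.symm) hm))
  simp only [map_sum, hG] at hcoassoc
  have hcounit : ∀ l ∈ u, ∑ j ∈ (ℛ k (e l)).index,
      f (m0 l ⊗ₜ (actA (Sinv ((ℛ k (e l)).right j) * (ℛ k (e l)).left j) a * b))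
      = ε (e l) * f (m0 l ⊗ₜ (a * b)) := by
    intro l _
    rw [← map_sum, ← tmul_sum, ← Finset.sum_mul, ← LinearMap.sum_apply, ← map_sum,
      sum_invAntipode_right_mul hS hS' (ℛ k (e l)), map_smul, hactA.1]
    simp only [LinearMap.smul_apply, LinearMap.id_apply, smul_mul_assoc, tmul_smul, map_smul,
      smul_eq_mul]
  have htrace : ∀ l ∈ u, f (m0 l ⊗ₜ (b * actA (e l) a))
      = ∑ j ∈ s l, f (m' l j ⊗ₜ (actA (Sinv (g l j) * e l) a * b)) := by
    intro l _
    simp only [apply_tmul_mul_of_closed hclosed (hm l), hactA.2, LinearMap.comp_apply]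
  rw [Finset.sum_congr rfl hcounit] at hcoassoc
  rw [Finset.sum_congr rfl htrace, ← hcoassoc]
  conv_lhs => rw [← hco.sum_counit_smul hrep]
  simp only [sum_tmul, map_sum, ← smul_tmul', map_smul, smul_eq_mul]

theorem pairing_cyc {Sinv : H →ₗ[k] H} (hS : ∀ g : H, Sinv (S g) = g)
    (hS' : ∀ g : H, S (Sinv g) = g) (hactA : IsLAct actA) (hco : IsLCoact Δ ε coactM)
    (hclosed : Dop Sinv actA coactM 0 0 f = Dop Sinv actA coactM 0 1 f)
    (hCA : ∀ (h : H) (c : C) (a : A), actCA (actC h c) a = actA h (actCA c a))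
    (n : ℕ) (x : M ⊗[k] ↥(Tpow (k := k) C n)) :
    pairing actCA n f (cyc actC coactM n x) = pairing actCA n f x ∘ₗ rot n := by
  induction x using TensorProduct.induction_on with
  | zero => simp
  | add x₁ x₂ h₁ h₂ => simp only [map_add, h₁, h₂, LinearMap.add_comp]
  | tmul m ξ =>
    obtain ⟨u, e, m0, hrep⟩ := exists_sum_range_tmul (coactM m)
    have htrace := apply_tmul_mul_swap_of_closed hS hS' hactA hco hclosed hrep
    cases n with
    | zero =>
      ext a
      have := htrace (actCA ξ a) 1
      simp only [mul_one, one_mul] at this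
      rw [cyc_zero_tmul actC hrep, map_sum, LinearMap.sum_apply]
      refine (Finset.sum_congr rfl fun l _ => ?_).trans this.symm
      exact congrArg (fun b => f (m0 l ⊗ₜ b)) (hCA (e l) ξ a)
    | succ n =>
      induction ξ using Tpow.induction_on_succ with
      | zero => simp
      | add ξ₁ ξ₂ h₁ h₂ => simp only [tmul_add, map_add, h₁, h₂, LinearMap.add_comp]
      | cons c x =>
        ext y
        obtain ⟨z, rfl⟩ := (unsnoc (C := A) n).symm.surjective y
        induction z using TensorProduct.induction_on with
        | zero => simp
        | add z₁ z₂ h₁ h₂ => simp only [map_add, h₁, h₂]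
        | tmul y a =>
          simp only [cyc_succ_tmul_cons actC hrep, map_sum, LinearMap.sum_apply,
            pairing_tmul_apply, LinearMap.comp_apply, rot_succ_unsnoc_symm,
            ev_snoc_tmul_unsnoc_symm, ev_cons_tmul_cons, hCA]
          exact (htrace _ _).symm

theorem pairing_faceMap {Sinv : H →ₗ[k] H} (hS : ∀ g : H, Sinv (S g) = g)
    (hS' : ∀ g : H, S (Sinv g) = g) (hactA : IsLAct actA) (hco : IsLCoact Δ ε coactM)
    (hclosed : Dop Sinv actA coactM 0 0 f = Dop Sinv actA coactM 0 1 f)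
    (hCA : ∀ (h : H) (c : C) (a : A), actCA (actC h c) a = actA h (actCA c a))
    {ΔC : C →ₗ[k] C ⊗[k] C} (hΔC : MeasuresMul ΔC actCA)
    (n i : ℕ) (x : M ⊗[k] ↥(Tpow (k := k) C n)) :
    pairing actCA (n+1) f (faceMap ΔC actC coactM n i x) = Dord n i (pairing actCA n f x) := by
  by_cases hi : i = n + 1
  · simp only [faceMap, Dord, if_pos hi, LinearMap.comp_apply,
      pairing_cyc hS hS' hactA hco hclosed hCA, pairing_map_coface actCA f hΔC,
      LinearMap.comp_assoc]
  · simp only [faceMap, Dord, if_neg hi, pairing_map_coface actCA f hΔC]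

theorem pairing_bC {Sinv : H →ₗ[k] H} (hS : ∀ g : H, Sinv (S g) = g)
    (hS' : ∀ g : H, S (Sinv g) = g) (hactA : IsLAct actA) (hco : IsLCoact Δ ε coactM)
    (hclosed : Dop Sinv actA coactM 0 0 f = Dop Sinv actA coactM 0 1 f)
    (hCA : ∀ (h : H) (c : C) (a : A), actCA (actC h c) a = actA h (actCA c a))
    {ΔC : C →ₗ[k] C ⊗[k] C} (hΔC : MeasuresMul ΔC actCA)
    (n : ℕ) (x : M ⊗[k] ↥(Tpow (k := k) C n)) :
    pairing actCA (n+1) f (bC ΔC actC coactM n x) = bord n (pairing actCA n f x) := by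
  simp only [bC, bord, LinearMap.sum_apply, LinearMap.smul_apply, map_sum,
    map_smul, pairing_faceMap hS hS' hactA hco hclosed hCA hΔC]

theorem pairing_eq_zero_of_mem_rel (hfeq : EquivFn Δ ε S actA actM 0 f) (hactA : IsLAct actA)
    (hA : IsModAlg Δ ε actA)
    (hCA : ∀ (h : H) (c : C) (a : A), actCA (actC h c) a = actA h (actCA c a))
    {n : ℕ} {z : M ⊗[k] ↥(Tpow (k := k) C n)} (hz : z ∈ rel Δ actC actM n) :
    pairing actCA n f z = 0 := by
  refine (Submodule.span_le (p := LinearMap.ker (pairing actCA n f))).mpr ?_ hz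
  rintro _ ⟨h, m, x, rfl⟩
  rw [SetLike.mem_coe, LinearMap.mem_ker, map_sub, sub_eq_zero]
  ext a
  rw [pairing_tmul_apply, pairing_tmul_apply, ev_dAct_tmul actCA hCA hA.1,
    hfeq.apply_actM_tmul hactA]

end HopfCyclic

end HC

theorem stmt17_general {k : Type} [Field k]
    {H : Type} [Ring H] [HopfAlgebra k H]
    (Sinv : H →ₗ[k] H)
    (hS : ∀ h : H, Sinv (HopfAlgebra.antipode (R := k) h) = h)
    (hS' : ∀ h : H, HopfAlgebra.antipode (R := k) (Sinv h) = h)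
    {M : Type} [AddCommGroup M] [Module k M]
    (actM : H →ₗ[k] M →ₗ[k] M) (coactM : M →ₗ[k] H ⊗[k] M)
    (hcoactM : IsLCoact (Coalgebra.comul (R := k)) (Coalgebra.counit (R := k)) coactM)
    {C : Type} [AddCommGroup C] [Module k C]
    (ΔC : C →ₗ[k] C ⊗[k] C) (actC : H →ₗ[k] C →ₗ[k] C)
    {A : Type} [Ring A] [Algebra k A]
    (actA : H →ₗ[k] A →ₗ[k] A) (hactA : IsLAct actA)
    (hmodalg : IsModAlg (Coalgebra.comul (R := k)) (Coalgebra.counit (R := k)) actA)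
    -- the action of `C` on `A`:
    (actCA : C →ₗ[k] A →ₗ[k] A)
    (hCA1 : ∀ (c : C) (x y : A) (u : Finset ℕ) (c1 c2 : ℕ → C),
      ΔC c = ∑ j ∈ u, c1 j ⊗ₜ c2 j →
      actCA c (x * y) = ∑ j ∈ u, actCA (c1 j) x * actCA (c2 j) y)
    (hCA3 : ∀ (h : H) (c : C) (a : A),
      actCA (actC h c) a = actA h (actCA c a))
    -- the closed equivariant `0`-cocycle `f` on `A`:
    (f : M ⊗[k] ↥(Tpow (k := k) A 0) →ₗ[k] k)
    (hfequiv : EquivFn (Coalgebra.comul (R := k)) (Coalgebra.counit (R := k))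
      (HopfAlgebra.antipode (R := k)) actA actM 0 f)
    (hfclosed : Dop Sinv actA coactM 0 0 f = Dop Sinv actA coactM 0 1 f) :
    -- (0) the pairing vanishes on the balancing relations
    (∀ (n : ℕ), ∀ z ∈ rel (Coalgebra.comul (R := k)) actC actM n,
      pairFn (M := M) actCA n f z = 0) ∧
    -- (1),(2) cyclic cocycles pair to ordinary cyclic cocycles
    (∀ (n : ℕ) (x : M ⊗[k] ↥(Tpow (k := k) C n)),
      bC ΔC actC coactM n x ∈ rel (Coalgebra.comul (R := k)) actC actM (n+1) →
      cyc actC coactM n x - ((-1 : k) ^ n) • x ∈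
        rel (Coalgebra.comul (R := k)) actC actM n →
      ((pairFn (M := M) actCA n f x) ∘ₗ rot n =
          ((-1 : k) ^ n) • pairFn (M := M) actCA n f x) ∧
        bord n (pairFn (M := M) actCA n f x) = 0) ∧
    -- (3) the class of `x # f` depends only on the class of `x`
    (∀ (m : ℕ) (x x' : M ⊗[k] ↥(Tpow (k := k) C (m+1)))
        (y : M ⊗[k] ↥(Tpow (k := k) C m))
        (r : M ⊗[k] ↥(Tpow (k := k) C (m+1))),
      bC ΔC actC coactM (m+1) x ∈ rel (Coalgebra.comul (R := k)) actC actM (m+2) →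
      cyc actC coactM (m+1) x - ((-1 : k) ^ (m+1)) • x ∈
        rel (Coalgebra.comul (R := k)) actC actM (m+1) →
      cyc actC coactM m y - ((-1 : k) ^ m) • y ∈
        rel (Coalgebra.comul (R := k)) actC actM m →
      r ∈ rel (Coalgebra.comul (R := k)) actC actM (m+1) →
      x' = x + bC ΔC actC coactM m y + r →
      ∃ ψ : ↥(Tpow (k := k) A m) →ₗ[k] k,
        ψ ∘ₗ rot m = ((-1 : k) ^ m) • ψ ∧
        pairFn (M := M) actCA (m+1) f x' - pairFn (M := M) actCA (m+1) f x =
          bord m ψ) := by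
  have hrel : ∀ n, ∀ z ∈ rel (Coalgebra.comul (R := k)) actC actM n, pairing actCA n f z = 0 :=
    fun _ _ hz => pairing_eq_zero_of_mem_rel hfequiv hactA hmodalg hCA3 hz
  have hbC := pairing_bC hS hS' hactA hcoactM hfclosed hCA3 hCA1
  have hcyclic : ∀ n (x : M ⊗[k] ↥(Tpow (k := k) C n)),
      cyc actC coactM n x - ((-1 : k) ^ n) • x ∈ rel (Coalgebra.comul (R := k)) actC actM n →
      pairing actCA n f x ∘ₗ rot n = ((-1 : k) ^ n) • pairing actCA n f x := by
    intro n x hx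
    have := hrel n _ hx
    rwa [map_sub, map_smul, sub_eq_zero, pairing_cyc hS hS' hactA hcoactM hfclosed hCA3] at this
  refine ⟨hrel, fun n x hbx hx => ⟨hcyclic n x hx, (hbC n x).symm.trans (hrel _ _ hbx)⟩,
    fun m x x' y r _ _ hy hr hx' => ⟨pairing actCA m f y, hcyclic m y hy, ?_⟩⟩
  change pairing actCA (m+1) f x' - pairing actCA (m+1) f x = _
  rw [hx', map_add, map_add, hrel _ r hr, hbC]
  abel

/-- (Pairing `HCⁿ_H(C,M) ⊗ Z⁰_H(A,M) → HCⁿ(A)`.)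
Given a left `H`-module coalgebra `C` acting on a left `H`-module algebra `A`
and a stable right-left anti-Yetter-Drinfeld module `M` (over a field of
characteristic zero), every cyclic `n`-cocycle `x` of the Hopf-cyclic complex
of `C` with coefficients in `M` and every closed equivariant `0`-cocycle
`f : M ⊗ A → k` pair to an ordinary cyclic `n`-cocycle `x # f` of `A`, and the
cyclic cohomology class of `x # f` only depends on the class of `x`. -/
theorem stmt17 {k : Type} [Field k] [CharZero k]
    {H : Type} [Ring H] [HopfAlgebra k H]
    (Sinv : H →ₗ[k] H)
    (hS : ∀ h : H, Sinv (HopfAlgebra.antipode (R := k) h) = h)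
    (hS' : ∀ h : H, HopfAlgebra.antipode (R := k) (Sinv h) = h)
    {M : Type} [AddCommGroup M] [Module k M]
    (actM : H →ₗ[k] M →ₗ[k] M) (coactM : M →ₗ[k] H ⊗[k] M)
    (hactM : IsRAct actM)
    (hcoactM : IsLCoact (Coalgebra.comul (R := k)) (Coalgebra.counit (R := k)) coactM)
    (hAYD : AYDrl (Coalgebra.comul (R := k)) (HopfAlgebra.antipode (R := k)) actM coactM)
    (hstable : StableL actM coactM)
    {C : Type} [AddCommGroup C] [Module k C]
    (ΔC : C →ₗ[k] C ⊗[k] C) (εC : C →ₗ[k] k) (actC : H →ₗ[k] C →ₗ[k] C)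
    (hCcoalg : IsCoalg ΔC εC) (hactC : IsLAct actC)
    (hmodcoalg : IsModCoalg (Coalgebra.comul (R := k)) (Coalgebra.counit (R := k))
      ΔC εC actC)
    {A : Type} [Ring A] [Algebra k A]
    (actA : H →ₗ[k] A →ₗ[k] A) (hactA : IsLAct actA)
    (hmodalg : IsModAlg (Coalgebra.comul (R := k)) (Coalgebra.counit (R := k)) actA)
    -- the action of `C` on `A`:
    (actCA : C →ₗ[k] A →ₗ[k] A)
    (hCA1 : ∀ (c : C) (x y : A) (u : Finset ℕ) (c1 c2 : ℕ → C),
      ΔC c = ∑ j ∈ u, c1 j ⊗ₜ c2 j →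
      actCA c (x * y) = ∑ j ∈ u, actCA (c1 j) x * actCA (c2 j) y)
    (hCA2 : ∀ c : C, actCA c 1 = εC c • (1 : A))
    (hCA3 : ∀ (h : H) (c : C) (a : A),
      actCA (actC h c) a = actA h (actCA c a))
    -- the closed equivariant `0`-cocycle `f` on `A`:
    (f : M ⊗[k] ↥(Tpow (k := k) A 0) →ₗ[k] k)
    (hfequiv : EquivFn (Coalgebra.comul (R := k)) (Coalgebra.counit (R := k))
      (HopfAlgebra.antipode (R := k)) actA actM 0 f)
    (hfclosed : Dop Sinv actA coactM 0 0 f = Dop Sinv actA coactM 0 1 f)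
    (hfcyc : Top Sinv actA coactM 0 f = f) :
    -- (0) the pairing vanishes on the balancing relations
    (∀ (n : ℕ), ∀ z ∈ rel (Coalgebra.comul (R := k)) actC actM n,
      pairFn (M := M) actCA n f z = 0) ∧
    -- (1),(2) cyclic cocycles pair to ordinary cyclic cocycles
    (∀ (n : ℕ) (x : M ⊗[k] ↥(Tpow (k := k) C n)),
      bC ΔC actC coactM n x ∈ rel (Coalgebra.comul (R := k)) actC actM (n+1) →
      cyc actC coactM n x - ((-1 : k) ^ n) • x ∈
        rel (Coalgebra.comul (R := k)) actC actM n →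
      ((pairFn (M := M) actCA n f x) ∘ₗ rot n =
          ((-1 : k) ^ n) • pairFn (M := M) actCA n f x) ∧
        bord n (pairFn (M := M) actCA n f x) = 0) ∧
    -- (3) the class of `x # f` depends only on the class of `x`
    (∀ (m : ℕ) (x x' : M ⊗[k] ↥(Tpow (k := k) C (m+1)))
        (y : M ⊗[k] ↥(Tpow (k := k) C m))
        (r : M ⊗[k] ↥(Tpow (k := k) C (m+1))),
      bC ΔC actC coactM (m+1) x ∈ rel (Coalgebra.comul (R := k)) actC actM (m+2) →
      cyc actC coactM (m+1) x - ((-1 : k) ^ (m+1)) • x ∈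
        rel (Coalgebra.comul (R := k)) actC actM (m+1) →
      cyc actC coactM m y - ((-1 : k) ^ m) • y ∈
        rel (Coalgebra.comul (R := k)) actC actM m →
      r ∈ rel (Coalgebra.comul (R := k)) actC actM (m+1) →
      x' = x + bC ΔC actC coactM m y + r →
      ∃ ψ : ↥(Tpow (k := k) A m) →ₗ[k] k,
        ψ ∘ₗ rot m = ((-1 : k) ^ m) • ψ ∧
        pairFn (M := M) actCA (m+1) f x' - pairFn (M := M) actCA (m+1) f x =
          bord m ψ) :=
  stmt17_general Sinv hS hS' actM coactM hcoactM ΔC actC actA hactA hmodalg actCA hCA1 hCA3 f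
    hfequiv hfclosed
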